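/- arXiv:1502.04782 — 4 statements merged into one kernel-verified Lean document; each statement's English description precedes it below -/
import Mathlib

section
/- In the subgroup lattice of the symmetric group S₄, the six subgroups H₁ = ⟨(12)⟩, K₁ = ⟨(123),(12)⟩, H₂ = ⟨(13)⟩, K₂ = ⟨(134),(13)⟩, H₃ = ⟨(14)⟩ and K₃ = ⟨(124),(14)⟩ form a crown of order 6; consequently the subgroup lattice of S₄ is not dismantlable. -/
/-- A finite lattice `L` with `n` elements is *dismantlable* if there is a chain
`L₁ ⊆ L₂ ⊆ ... ⊆ Lₙ = L` of sublattices of `L` with `|Lᵢ| = i` for `i = 1, ..., n`. -/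
def Dismantlable (L : Type*) [Lattice L] [Finite L] : Prop :=
  ∃ c : ℕ → Set L,
    (∀ i, 1 ≤ i → i ≤ Nat.card L → IsSublattice (c i) ∧ Nat.card (c i) = i) ∧
    (∀ i, 1 ≤ i → i < Nat.card L → c i ⊆ c (i + 1)) ∧
    c (Nat.card L) = Set.univ

/-- `x 0, y 0, x 1, y 1, ..., x (n-1), y (n-1)` form a *crown of order `2n`* (for `n ≥ 3`)
in a poset: the `2n` elements are pairwise distinct, and the only comparability relations
among them are `x i ≤ y i` and `x (i+1) ≤ y i` (indices mod `n`). -/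
def IsCrown {P : Type*} [PartialOrder P] {n : ℕ} (x y : Fin n → P) : Prop :=
  3 ≤ n ∧ Function.Injective x ∧ Function.Injective y ∧
  (∀ i j, x i ≠ y j) ∧
  (∀ i j, x i ≤ x j → i = j) ∧
  (∀ i j, y i ≤ y j → i = j) ∧
  (∀ i j, ¬ y i ≤ x j) ∧
  (∀ i j, x i ≤ y j ↔ (i = j ∨ (i : ℕ) = ((j : ℕ) + 1) % n))

/-!
A crown in a lattice survives the removal of one element, provided what remains is a sublattice:
a removed bottom element `x (i + 1)` can be replaced by `y i ⊓ y (i + 1)`, and dually a removed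
top element `y i` by `x i ⊔ x (i + 1)`. Walking down a dismantling chain `Lₙ ⊇ ⋯ ⊇ L₁`, each `Lᵢ`
would therefore contain a crown, which is absurd for the one-element `L₁`.

In `S₄` every non-inclusion between the six subgroups is witnessed by a generator of the first
that moves a point fixed by all generators of the second.
-/

open OrderDual Function

lemma Fin.add_one_ne_self {n : ℕ} [NeZero n] (hn : n ≠ 1) (i : Fin n) : i + 1 ≠ i := by
  simpa [Fin.ext_iff] using hn

lemma Fin.add_one_add_one_ne_self {n : ℕ} [NeZero n] (hn : 2 < n) (i : Fin n) :
    i + 1 + 1 ≠ i := by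
  rw [add_assoc, Ne, add_eq_left, Fin.ext_iff, Fin.val_add, Fin.val_one',
    Nat.mod_eq_of_lt (by omega : 1 < n), Fin.val_zero, Nat.mod_eq_of_lt hn]
  omega

namespace IsCrown

section PartialOrder

variable {P : Type*} [PartialOrder P] {n : ℕ} [NeZero n] {x y : Fin n → P}

lemma of_le (hn : 3 ≤ n) (hxx : ∀ i j, x i ≤ x j → i = j) (hyy : ∀ i j, y i ≤ y j → i = j)
    (hyx : ∀ i j, ¬ y i ≤ x j) (hxy : ∀ i j, x i ≤ y j ↔ i = j ∨ i = j + 1) :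
    IsCrown x y := by
  refine ⟨hn, fun i j h => hxx i j h.le, fun i j h => hyy i j h.le,
    fun i j h => hyx j i h.ge, hxx, hyy, hyx, fun i j => ?_⟩
  simp [hxy, Fin.ext_iff, Fin.val_add]

lemma le_iff (h : IsCrown x y) (i j : Fin n) : x i ≤ y j ↔ i = j ∨ i = j + 1 := by
  simp [h.2.2.2.2.2.2.2, Fin.ext_iff, Fin.val_add]

-- Bottoms and tops swap roles; the shift `· + 1` restores the indexing `x i, x (i + 1) ≤ y i`.
lemma dual (h : IsCrown x y) : IsCrown (toDual ∘ y) (toDual ∘ x ∘ (· + 1)) := by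
  have hxy := h.le_iff
  obtain ⟨hn, -, -, -, hxx, hyy, hyx, -⟩ := h
  refine of_le hn (fun i j hij => (hyy j i hij).symm)
    (fun i j hij => add_right_cancel (hxx _ _ hij).symm) (fun i j => hyx j (i + 1)) (fun i j => ?_)
  change x (j + 1) ≤ y i ↔ _
  rw [hxy, add_left_inj]
  tauto

lemma update_left (h : IsCrown x y) (k : Fin n) {m : P} (hxm : ∀ j, x j ≤ m → j = k)
    (hmx : ∀ j, m ≤ x j → j = k) (hym : ∀ j, ¬ y j ≤ m) (hmy : ∀ j, m ≤ y j ↔ x k ≤ y j) :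
    IsCrown (update x k m) y := by
  have hxy := h.le_iff
  obtain ⟨hn, -, -, -, hxx, hyy, hyx, -⟩ := h
  refine of_le hn (fun i j hij => ?_) hyy (fun i j => ?_) (fun i j => ?_)
  · by_cases hi : i = k <;> by_cases hj : j = k
    · exact hi.trans hj.symm
    · rw [hi, update_self, update_of_ne hj] at hij; exact hi.trans (hmx j hij).symm
    · rw [hj, update_self, update_of_ne hi] at hij; exact (hxm i hij).trans hj.symm
    · rw [update_of_ne hi, update_of_ne hj] at hij; exact hxx i j hij
  · by_cases hj : j = k
    · rw [hj, update_self]; exact hym i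
    · rw [update_of_ne hj]; exact hyx i j
  · by_cases hi : i = k
    · rw [hi, update_self, hmy, hxy]
    · rw [update_of_ne hi, hxy]

end PartialOrder

lemma update_inf {L : Type*} [SemilatticeInf L] {n : ℕ} [NeZero n] {x y : Fin n → L}
    (h : IsCrown x y) (i : Fin n) : IsCrown (update x (i + 1) (y i ⊓ y (i + 1))) y := by
  have hn : 2 < n := h.1
  have hxx := h.2.2.2.2.1
  have hyy := h.2.2.2.2.2.1
  have hle_left : x (i + 1) ≤ y i := (h.le_iff _ _).2 (Or.inr rfl)
  have hle_right : x (i + 1) ≤ y (i + 1) := (h.le_iff _ _).2 (Or.inl rfl)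
  refine h.update_left (i + 1) (fun j hj => ?_) (fun j hj => ?_) (fun j hj => ?_) (fun j => ?_)
  · rcases (h.le_iff j i).1 (hj.trans inf_le_left) with rfl | rfl
    · rcases (h.le_iff j (j + 1)).1 (hj.trans inf_le_right) with h' | h'
      · exact (Fin.add_one_ne_self (by omega) j h'.symm).elim
      · exact (Fin.add_one_add_one_ne_self hn j h'.symm).elim
    · rfl
  · exact (hxx _ _ ((le_inf hle_left hle_right).trans hj)).symm
  · have h₁ := hyy j i (hj.trans inf_le_left)
    have h₂ := hyy j (i + 1) (hj.trans inf_le_right)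
    exact Fin.add_one_ne_self (by omega) i (h₂.symm.trans h₁)
  · refine ⟨fun hj => (le_inf hle_left hle_right).trans hj, fun hj => ?_⟩
    rcases (h.le_iff _ _).1 hj with h' | h'
    · exact h' ▸ inf_le_right
    · exact add_right_cancel h' ▸ inf_le_left

end IsCrown

def HasCrownIn {P : Type*} [PartialOrder P] (n : ℕ) (S : Set P) : Prop :=
  ∃ x y : Fin n → P, IsCrown x y ∧ (∀ i, x i ∈ S) ∧ (∀ i, y i ∈ S)

namespace HasCrownIn

lemma nontrivial {P : Type*} [PartialOrder P] {n : ℕ} {S : Set P} (h : HasCrownIn n S) :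
    S.Nontrivial := by
  obtain ⟨x, y, hc, hx, hy⟩ := h
  let i : Fin n := ⟨0, by have := hc.1; omega⟩
  exact ⟨x i, hx i, y i, hy i, hc.2.2.2.1 i i⟩

lemma of_forall_ne_mem {L : Type*} [SemilatticeInf L] {n : ℕ} [NeZero n] {S : Set L}
    (hS : InfClosed S) {x y : Fin n → L} (h : IsCrown x y) {k : Fin n}
    (hx : ∀ j ≠ k, x j ∈ S) (hy : ∀ j, y j ∈ S) : HasCrownIn n S := by
  refine ⟨_, y, h.update_inf (k - 1), fun j => ?_, hy⟩
  rw [sub_add_cancel]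
  by_cases hj : j = k
  · rw [hj, update_self]; exact hS (hy _) (hy _)
  · rw [update_of_ne hj]; exact hx j hj

lemma of_insert {L : Type*} [Lattice L] {n : ℕ} {S : Set L} (hS : IsSublattice S) {a : L}
    (h : HasCrownIn n (insert a S)) : HasCrownIn n S := by
  obtain ⟨x, y, hc, hx, hy⟩ := h
  have : NeZero n := ⟨by have := hc.1; omega⟩
  by_cases hxa : ∃ k, x k = a
  · obtain ⟨k, rfl⟩ := hxa
    exact of_forall_ne_mem hS.infClosed hc (k := k)
      (fun j hj => (hx j).resolve_left (hc.2.1.ne hj))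
      (fun j => (hy j).resolve_left (hc.2.2.2.1 k j).symm)
  by_cases hya : ∃ k, y k = a
  · obtain ⟨k, rfl⟩ := hya
    obtain ⟨x', y', hc', hx', hy'⟩ : HasCrownIn n (ofDual ⁻¹' S) :=
      of_forall_ne_mem hS.dual.infClosed hc.dual (k := k)
        (fun j hj => (hy j).resolve_left (hc.2.2.1.ne hj))
        (fun j => (hx _).resolve_left (hc.2.2.2.1 _ k))
    exact ⟨ofDual ∘ y', ofDual ∘ x' ∘ (· + 1), hc'.dual, fun i => hy' i, fun i => hx' _⟩
  simp only [not_exists] at hxa hya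
  exact ⟨x, y, hc, fun i => (hx i).resolve_left (hxa i), fun i => (hy i).resolve_left (hya i)⟩

end HasCrownIn

theorem IsCrown.not_dismantlable {L : Type*} [Lattice L] [Finite L] {n : ℕ}
    {x y : Fin n → L} (h : IsCrown x y) : ¬ Dismantlable L := by
  rintro ⟨c, hc, hmono, htop⟩
  have : Nonempty L := ⟨x ⟨0, by have := h.1; omega⟩⟩
  have hN : 1 ≤ Nat.card L := Nat.card_pos
  have hcard : ∀ k, 1 ≤ k → k ≤ Nat.card L → (c k).ncard = k := fun k h1 h2 => by
    rw [← Nat.card_coe_set_eq]; exact (hc k h1 h2).2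
  have hcrown : HasCrownIn n (c 1) := by
    refine Nat.decreasingInduction' (P := fun k => HasCrownIn n (c k)) (fun k hk hk1 ih => ?_) hN
      (htop ▸ ⟨x, y, h, fun _ => trivial, fun _ => trivial⟩)
    obtain ⟨a, -, ha⟩ := (Set.exists_eq_insert_iff_ncard).2
      ⟨hmono k hk1 hk, by rw [hcard k hk1 hk.le, hcard (k + 1) (by omega) hk]⟩
    exact HasCrownIn.of_insert (hc k hk1 hk.le).1 (ha ▸ ih)
  obtain ⟨a, ha⟩ := Set.ncard_eq_one.1 (hcard 1 le_rfl hN)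
  exact Set.not_nontrivial_singleton (ha ▸ hcrown.nontrivial)

namespace Subgroup

variable {G : Type*} [Group G]

lemma not_closure_le_closure_of_exists_fixed {α : Type*} [MulAction G α] {A B : Set G}
    (h : ∃ g ∈ A, ∃ p : α, (∀ b ∈ B, b • p = p) ∧ g • p ≠ p) :
    ¬ closure A ≤ closure B := by
  obtain ⟨g, hg, p, hB, hgp⟩ := h
  intro hAB
  have hB' : closure B ≤ MulAction.stabilizer G p := (closure_le _).2 hB
  exact hgp (hB' (hAB (subset_closure hg)))

lemma closure_singleton_le_closure_pair {a b g : G}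
    (h : g = a ∨ g = b ∨ g = a * b ∨ g = b * a) : closure {g} ≤ closure {a, b} := by
  have ha : a ∈ closure {a, b} := subset_closure (by simp)
  have hb : b ∈ closure {a, b} := subset_closure (by simp)
  rw [closure_le, Set.singleton_subset_iff]
  rcases h with rfl | rfl | rfl | rfl
  exacts [ha, hb, mul_mem ha hb, mul_mem hb ha]

end Subgroup

open Subgroup Equiv in
theorem isCrown_closure_swap_perm_fin_four :
    IsCrown
      (![closure {swap (0 : Fin 4) 1}, closure {swap (0 : Fin 4) 2},
        closure {swap (0 : Fin 4) 3}] : Fin 3 → Subgroup (Perm (Fin 4)))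
      ![closure {swap (0 : Fin 4) 1 * swap (1 : Fin 4) 2, swap (0 : Fin 4) 1},
        closure {swap (0 : Fin 4) 2 * swap (2 : Fin 4) 3, swap (0 : Fin 4) 2},
        closure {swap (0 : Fin 4) 1 * swap (1 : Fin 4) 3, swap (0 : Fin 4) 3}] := by
  refine IsCrown.of_le le_rfl ?_ ?_ ?_ ?_ <;> intro i j <;> fin_cases i <;> fin_cases j
  all_goals first
    | exact fun _ => rfl
    | exact iff_of_true (closure_singleton_le_closure_pair (by decide)) (by decide)
    | refine iff_of_false ?_ (by decide)
    | refine fun hij => absurd hij ?_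
  all_goals
    apply not_closure_le_closure_of_exists_fixed (α := Fin 4)
    simp only [Set.mem_insert_iff, Set.mem_singleton_iff, exists_eq_or_imp, exists_eq_left,
      forall_eq_or_imp, forall_eq]
    decide

/-- In the subgroup lattice of `S₄`, the subgroups `H₁ = ⟨(12)⟩`, `K₁ = ⟨(123),(12)⟩`,
`H₂ = ⟨(13)⟩`, `K₂ = ⟨(134),(13)⟩`, `H₃ = ⟨(14)⟩`, `K₃ = ⟨(124),(14)⟩` form a crown of
order 6; consequently the subgroup lattice of `S₄` is not dismantlable.
(Letters `1,2,3,4` are represented by `0,1,2,3 : Fin 4`.) -/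
theorem stmt9 :
    IsCrown
      (![Subgroup.closure {Equiv.swap (0 : Fin 4) 1},
         Subgroup.closure {Equiv.swap (0 : Fin 4) 2},
         Subgroup.closure {Equiv.swap (0 : Fin 4) 3}] :
        Fin 3 → Subgroup (Equiv.Perm (Fin 4)))
      ![Subgroup.closure {Equiv.swap (0 : Fin 4) 1 * Equiv.swap (1 : Fin 4) 2,
          Equiv.swap (0 : Fin 4) 1},
        Subgroup.closure {Equiv.swap (0 : Fin 4) 2 * Equiv.swap (2 : Fin 4) 3,
          Equiv.swap (0 : Fin 4) 2},
        Subgroup.closure {Equiv.swap (0 : Fin 4) 1 * Equiv.swap (1 : Fin 4) 3,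
          Equiv.swap (0 : Fin 4) 3}] ∧
    ¬ Dismantlable (Subgroup (Equiv.Perm (Fin 4))) :=
  ⟨isCrown_closure_swap_perm_fin_four, isCrown_closure_swap_perm_fin_four.not_dismantlable⟩
end

section
/- Let G ≅ G₁ × G₂ be a finite group, where G₁ is a non-cyclic finite p-group and G₂ is a nontrivial finite q-group for distinct primes p and q. Then the subgroup lattice of G contains a crown of order 6; in particular, L(G) is not dismantlable. (Explicitly, if M and M′ are two distinct maximal subgroups of G₁, then the subgroups H₁ = M × 1, K₁ = G₁ × 1, H₂ = M′ × 1, K₂ = M′ × G₂, H₃ = (M ∩ M′) × G₂ and K₃ = M × G₂ form a crown of order 6 in L(G).) -/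
/-- A set `S` contains a crown of order 6. -/
def HasCrown3 {L : Type*} [PartialOrder L] (S : Set L) : Prop :=
  ∃ x y : Fin 3 → L, (∀ i, x i ∈ S) ∧ (∀ i, y i ∈ S) ∧ IsCrown x y

/-- Removing a single element from a superset of a sublattice preserves having a crown:
if `T ⊆ S` is a sublattice with exactly one element fewer than `S`, and `S` contains a
crown of order 6, then so does `T`. -/
lemma crown_removal {L : Type*} [Lattice L] [Finite L] {S T : Set L}
    (hT : IsSublattice T) (hTS : T ⊆ S) (hcard : Nat.card S = Nat.card T + 1)
    (h : HasCrown3 S) : HasCrown3 T := by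
  -- find the unique element of S \ T
  have hdiff : (S \ T).ncard = 1 := by
    rw [Set.ncard_diff hTS]
    rw [Nat.card_coe_set_eq, Nat.card_coe_set_eq] at hcard
    omega
  obtain ⟨a, hA⟩ := Set.ncard_eq_one.mp hdiff
  have haT : a ∉ T := by
    have : a ∈ S \ T := hA ▸ rfl
    exact this.2
  have hmem : ∀ s ∈ S, s ≠ a → s ∈ T := by
    intro s hs hne
    by_contra hsT
    have : s ∈ S \ T := ⟨hs, hsT⟩
    rw [hA] at this
    exact hne this
  obtain ⟨x, y, hxS, hyS, -, hxinj, hyinj, hne, hxx, hyy, hyx, hxy⟩ := h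
  -- index facts on Fin 3
  have f1 : ∀ i j : Fin 3, (i:ℕ) = ((j:ℕ)+1) % 3 → j = i - 1 := by decide
  have f2 : ∀ i : Fin 3, (((i-1 : Fin 3) : ℕ) + 1) % 3 = (i:ℕ) := by decide
  have f3 : ∀ i : Fin 3, i ≠ i - 1 := by decide
  have f4 : ∀ i : Fin 3, ((i+1 : Fin 3) : ℕ) = ((i:ℕ)+1) % 3 := by decide
  have f5 : ∀ i : Fin 3, i + 1 ≠ i := by decide
  have f6 : ∀ i j : Fin 3, (i:ℕ) = ((j:ℕ)+1) % 3 → i = j + 1 := by decide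
  have fcomb : ∀ i j : Fin 3, (i = j ∨ (i:ℕ) = ((j:ℕ)+1) % 3) →
      (i = j - 1 ∨ (i:ℕ) = (((j-1 : Fin 3):ℕ)+1) % 3) → i = j := by decide
  have gcomb : ∀ i j : Fin 3, (i = j ∨ (i:ℕ) = ((j:ℕ)+1) % 3) →
      (i + 1 = j ∨ ((i+1 : Fin 3):ℕ) = ((j:ℕ)+1) % 3) → i = j := by decide
  by_cases hax : ∃ i, a = x i
  · -- a is one of the x's: replace it by the meet of the two y's above it
    obtain ⟨i₀, ha⟩ := hax
    have yT : ∀ j, y j ∈ T := fun j => hmem _ (hyS j) (fun h => hne i₀ j (ha ▸ h.symm))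
    set z := y i₀ ⊓ y (i₀ - 1) with hzdef
    have hz1 : z ≤ y i₀ := inf_le_left
    have hz2 : z ≤ y (i₀ - 1) := inf_le_right
    have hxz : x i₀ ≤ z :=
      le_inf ((hxy i₀ i₀).mpr (Or.inl rfl)) ((hxy i₀ (i₀-1)).mpr (Or.inr (f2 i₀).symm))
    have zT : z ∈ T := hT.infClosed (yT i₀) (yT (i₀ - 1))
    set x' := Function.update x i₀ z with hx'def
    have hx'T : ∀ i, x' i ∈ T := by
      intro i
      rcases eq_or_ne i i₀ with rfl | hi
      · rw [hx'def, Function.update_self]; exact zT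
      · rw [hx'def, Function.update_of_ne hi]
        exact hmem _ (hxS i) (fun h => hi (hxinj (h.trans ha)))
    have hxx' : ∀ i j, x' i ≤ x' j → i = j := by
      intro i j hle
      rcases eq_or_ne i i₀ with rfl | hi
      · rcases eq_or_ne j i with rfl | hj
        · rfl
        · rw [hx'def, Function.update_self, Function.update_of_ne hj] at hle
          exact hxx i j (hxz.trans hle)
      · rcases eq_or_ne j i₀ with rfl | hj
        · rw [hx'def, Function.update_of_ne hi, Function.update_self] at hle
          exact fcomb i j ((hxy i j).mp (hle.trans hz1)) ((hxy i (j-1)).mp (hle.trans hz2))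
        · rw [hx'def, Function.update_of_ne hi, Function.update_of_ne hj] at hle
          exact hxx i j hle
    have hyx' : ∀ i j, ¬ y i ≤ x' j := by
      intro i j hle
      rcases eq_or_ne j i₀ with rfl | hj
      · rw [hx'def, Function.update_self] at hle
        exact f3 j ((hyy i j (hle.trans hz1)).symm.trans (hyy i (j-1) (hle.trans hz2)))
      · rw [hx'def, Function.update_of_ne hj] at hle
        exact hyx i j hle
    have hxy' : ∀ i j, x' i ≤ y j ↔ (i = j ∨ (i:ℕ) = ((j:ℕ)+1) % 3) := by
      intro i j
      rcases eq_or_ne i i₀ with rfl | hi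
      · rw [hx'def, Function.update_self]
        constructor
        · intro hle; exact (hxy i j).mp (hxz.trans hle)
        · rintro (rfl | hmod)
          · exact hz1
          · rw [f1 i j hmod]; exact hz2
      · rw [hx'def, Function.update_of_ne hi]; exact hxy i j
    exact ⟨x', y, hx'T, yT, le_refl 3,
      fun i j h => hxx' i j (le_of_eq h), hyinj,
      fun i j h => hyx' j i (le_of_eq h.symm), hxx', hyy, hyx', hxy'⟩
  · by_cases hay : ∃ i, a = y i
    · -- a is one of the y's: replace it by the join of the two x's below it
      obtain ⟨i₀, ha⟩ := hay
      have xT : ∀ j, x j ∈ T := fun j => hmem _ (hxS j) (fun h => hne j i₀ (h.trans ha))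
      set w := x i₀ ⊔ x (i₀ + 1) with hwdef
      have hw1 : x i₀ ≤ w := le_sup_left
      have hw2 : x (i₀ + 1) ≤ w := le_sup_right
      have hwy : w ≤ y i₀ :=
        sup_le ((hxy i₀ i₀).mpr (Or.inl rfl)) ((hxy (i₀+1) i₀).mpr (Or.inr (f4 i₀)))
      have wT : w ∈ T := hT.supClosed (xT i₀) (xT (i₀ + 1))
      set y' := Function.update y i₀ w with hy'def
      have hy'T : ∀ i, y' i ∈ T := by
        intro i
        rcases eq_or_ne i i₀ with rfl | hi
        · rw [hy'def, Function.update_self]; exact wT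
        · rw [hy'def, Function.update_of_ne hi]
          exact hmem _ (hyS i) (fun h => hi (hyinj (h.trans ha)))
      have hyy' : ∀ i j, y' i ≤ y' j → i = j := by
        intro i j hle
        rcases eq_or_ne i i₀ with rfl | hi
        · rcases eq_or_ne j i with rfl | hj
          · rfl
          · rw [hy'def, Function.update_self, Function.update_of_ne hj] at hle
            exact gcomb i j ((hxy i j).mp (hw1.trans hle)) ((hxy (i+1) j).mp (hw2.trans hle))
        · rcases eq_or_ne j i₀ with rfl | hj
          · rw [hy'def, Function.update_of_ne hi, Function.update_self] at hle
            exact hyy i j (hle.trans hwy)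
          · rw [hy'def, Function.update_of_ne hi, Function.update_of_ne hj] at hle
            exact hyy i j hle
      have hyx' : ∀ i j, ¬ y' i ≤ x j := by
        intro i j hle
        rcases eq_or_ne i i₀ with rfl | hi
        · rw [hy'def, Function.update_self] at hle
          have h1 : i = j := hxx i j (hw1.trans hle)
          have h2 : i + 1 = j := hxx (i+1) j (hw2.trans hle)
          exact f5 i (h2.trans h1.symm)
        · rw [hy'def, Function.update_of_ne hi] at hle
          exact hyx i j hle
      have hxy' : ∀ i j, x i ≤ y' j ↔ (i = j ∨ (i:ℕ) = ((j:ℕ)+1) % 3) := by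
        intro i j
        rcases eq_or_ne j i₀ with rfl | hj
        · rw [hy'def, Function.update_self]
          constructor
          · intro hle; exact (hxy i j).mp (hle.trans hwy)
          · rintro (rfl | hmod)
            · exact hw1
            · rw [f6 i j hmod]; exact hw2
        · rw [hy'def, Function.update_of_ne hj]; exact hxy i j
      exact ⟨x, y', xT, hy'T, le_refl 3, hxinj,
        fun i j h => hyy' i j (le_of_eq h),
        fun i j h => hyx' j i (le_of_eq h.symm), hxx, hyy', hyx', hxy'⟩
    · -- a is none of the crown elements
      push_neg at hax hay
      exact ⟨x, y,
        fun i => hmem _ (hxS i) (fun h => hax i h.symm),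
        fun i => hmem _ (hyS i) (fun h => hay i h.symm),
        le_refl 3, hxinj, hyinj, hne, hxx, hyy, hyx, hxy⟩

/-- A set containing a crown of order 6 has at least 6 elements. -/
lemma crown_six_le {P : Type*} [PartialOrder P] [Finite P] {S : Set P} {x y : Fin 3 → P}
    (h : IsCrown x y) (hx : ∀ i, x i ∈ S) (hy : ∀ i, y i ∈ S) : 6 ≤ Nat.card S := by
  obtain ⟨-, hxinj, hyinj, hne, -, -, -, -⟩ := h
  have hinj : Function.Injective
      (fun p : Fin 2 × Fin 3 => if p.1 = 0 then (⟨x p.2, hx p.2⟩ : S) else ⟨y p.2, hy p.2⟩) := by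
    rintro ⟨a1, a2⟩ ⟨b1, b2⟩ hab
    rcases Fin.exists_fin_two.mp ⟨a1, rfl⟩ with ha | ha
    all_goals rcases Fin.exists_fin_two.mp ⟨b1, rfl⟩ with hb | hb
    all_goals subst ha; subst hb; simp only [if_pos rfl, if_neg (by decide : (1:Fin 2) ≠ 0),
      reduceIte, Subtype.mk.injEq] at hab
    · exact Prod.ext rfl (hxinj hab)
    · exact absurd hab (hne _ _)
    · exact absurd hab.symm (hne _ _)
    · exact Prod.ext rfl (hyinj hab)
  calc (6:ℕ) = Nat.card (Fin 2 × Fin 3) := by simp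
    _ ≤ Nat.card S := Nat.card_le_card_of_injective _ hinj

lemma prod_le_prod_iff' {G N : Type*} [Group G] [Group N] {A C : Subgroup G} {B D : Subgroup N} :
    A.prod B ≤ C.prod D ↔ A ≤ C ∧ B ≤ D := by
  constructor
  · intro h
    constructor
    · intro a ha
      exact (Subgroup.mem_prod.mp (h (Subgroup.mem_prod.mpr ⟨ha, B.one_mem⟩ : (a,1) ∈ A.prod B))).1
    · intro b hb
      exact (Subgroup.mem_prod.mp (h (Subgroup.mem_prod.mpr ⟨A.one_mem, hb⟩ : ((1:G),b) ∈ A.prod B))).2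
  · intro ⟨h1, h2⟩; exact Subgroup.prod_mono h1 h2

/-- A finite lattice containing a crown of order 6 is not dismantlable. -/
lemma not_dismantlable_of_crown {L : Type*} [Lattice L] [Finite L] {x y : Fin 3 → L}
    (hcrown : IsCrown x y) : ¬ Dismantlable L := by
  rintro ⟨c, hc1, hc2, hc3⟩
  set N := Nat.card L with hNdef
  have hN6 : 6 ≤ N := by
    have := crown_six_le hcrown (fun i => Set.mem_univ (x i)) (fun i => Set.mem_univ (y i))
    rwa [Nat.card_coe_set_eq, Set.ncard_univ] at this
  have step : ∀ d k, 6 ≤ k → k + d = N → HasCrown3 (c k) := by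
    intro d
    induction d with
    | zero =>
      intro k h6 hk
      have : k = N := by omega
      subst this
      rw [hc3]
      exact ⟨x, y, fun i => Set.mem_univ _, fun i => Set.mem_univ _, hcrown⟩
    | succ d ih =>
      intro k h6 hk
      have h1 := hc1 k (by omega) (by omega)
      have h2 := hc1 (k+1) (by omega) (by omega)
      exact crown_removal h1.1 (hc2 k (by omega) (by omega))
        (by rw [h1.2, h2.2]) (ih (k+1) (by omega) (by omega))
  have h6 : HasCrown3 (c 6) := step (N - 6) 6 (le_refl 6) (by omega)
  have h5c := hc1 5 (by omega) (by omega)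
  have h6c := hc1 6 (by omega) (by omega)
  have h5 : HasCrown3 (c 5) :=
    crown_removal h5c.1 (hc2 5 (by omega) (by omega)) (by rw [h5c.2, h6c.2]) h6
  obtain ⟨x', y', hx', hy', hcr⟩ := h5
  have := crown_six_le hcr hx' hy'
  rw [h5c.2] at this
  omega

/-- If `G = G₁ × G₂` with `G₁` a non-cyclic finite `p`-group and `G₂` a nontrivial finite
`q`-group (`p ≠ q` primes), and `M`, `M'` are two distinct maximal subgroups of `G₁`, then
`M × 1`, `G₁ × 1`, `M' × 1`, `M' × G₂`, `(M ⊓ M') × G₂`, `M × G₂` form a crown of order 6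
in the subgroup lattice of `G`; in particular that lattice is not dismantlable. -/
theorem stmt12 {G₁ G₂ : Type*} [Group G₁] [Group G₂] [Finite G₁] [Finite G₂]
    (p q : ℕ) (hp : p.Prime) (hq : q.Prime) (hpq : p ≠ q)
    (h1 : IsPGroup p G₁) (hnc : ¬ IsCyclic G₁)
    (h2 : IsPGroup q G₂) (hnt : Nontrivial G₂)
    (M M' : Subgroup G₁) (hM : IsCoatom M) (hM' : IsCoatom M') (hMM' : M ≠ M') :
    IsCrown
      (![M.prod ⊥, M'.prod ⊥, (M ⊓ M').prod ⊤] : Fin 3 → Subgroup (G₁ × G₂))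
      ![(⊤ : Subgroup G₁).prod ⊥, M'.prod ⊤, M.prod ⊤] ∧
    ¬ Dismantlable (Subgroup (G₁ × G₂)) := by
  have hMle : ¬ M ≤ M' := fun h => hM'.1 (hM.2 M' (lt_of_le_of_ne h hMM'))
  have hM'le : ¬ M' ≤ M := fun h => hM.1 (hM'.2 M (lt_of_le_of_ne h hMM'.symm))
  have htopM : ¬ (⊤ : Subgroup G₁) ≤ M := fun h => hM.1 (top_le_iff.mp h)
  have htopM' : ¬ (⊤ : Subgroup G₁) ≤ M' := fun h => hM'.1 (top_le_iff.mp h)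
  have htb : ¬ (⊤ : Subgroup G₂) ≤ ⊥ := by
    obtain ⟨g, hg⟩ := exists_ne (1 : G₂)
    exact fun h => hg (Subgroup.mem_bot.mp (h (Subgroup.mem_top g)))
  have hMi : ¬ M ≤ M ⊓ M' := fun h => hMle (h.trans inf_le_right)
  have hM'i : ¬ M' ≤ M ⊓ M' := fun h => hM'le (h.trans inf_le_left)
  have htopi : ¬ (⊤ : Subgroup G₁) ≤ M ⊓ M' := fun h => htopM (h.trans inf_le_left)
  have hxx : ∀ i j : Fin 3, (![M.prod ⊥, M'.prod ⊥, (M ⊓ M').prod ⊤] : Fin 3 → Subgroup (G₁ × G₂)) i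
      ≤ ![M.prod ⊥, M'.prod ⊥, (M ⊓ M').prod ⊤] j → i = j := by
    intro i j
    fin_cases i <;> fin_cases j <;>
      simp [prod_le_prod_iff', hMle, hM'le, htopM, htopM', htb, hMi, hM'i, htopi,
        inf_le_left, inf_le_right]
  have hyy : ∀ i j : Fin 3, (![(⊤ : Subgroup G₁).prod ⊥, M'.prod ⊤, M.prod ⊤] : Fin 3 → Subgroup (G₁ × G₂)) i
      ≤ ![(⊤ : Subgroup G₁).prod ⊥, M'.prod ⊤, M.prod ⊤] j → i = j := by
    intro i j
    fin_cases i <;> fin_cases j <;>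
      simp [prod_le_prod_iff', hMle, hM'le, htopM, htopM', htb, hMi, hM'i, htopi]
  have hyx : ∀ i j : Fin 3, ¬ (![(⊤ : Subgroup G₁).prod ⊥, M'.prod ⊤, M.prod ⊤] : Fin 3 → Subgroup (G₁ × G₂)) i
      ≤ ![M.prod ⊥, M'.prod ⊥, (M ⊓ M').prod ⊤] j := by
    intro i j
    fin_cases i <;> fin_cases j <;>
      simp [prod_le_prod_iff', hMle, hM'le, htopM, htopM', htb, hMi, hM'i, htopi]
  have hxy : ∀ i j : Fin 3, (![M.prod ⊥, M'.prod ⊥, (M ⊓ M').prod ⊤] : Fin 3 → Subgroup (G₁ × G₂)) i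
      ≤ ![(⊤ : Subgroup G₁).prod ⊥, M'.prod ⊤, M.prod ⊤] j ↔
      (i = j ∨ (i : ℕ) = ((j : ℕ) + 1) % 3) := by
    intro i j
    fin_cases i <;> fin_cases j <;>
      simp [prod_le_prod_iff', hMle, hM'le, htopM, htopM', htb, hMi, hM'i, htopi,
        inf_le_left, inf_le_right]
  have hcrown : IsCrown
      (![M.prod ⊥, M'.prod ⊥, (M ⊓ M').prod ⊤] : Fin 3 → Subgroup (G₁ × G₂))
      ![(⊤ : Subgroup G₁).prod ⊥, M'.prod ⊤, M.prod ⊤] :=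
    ⟨le_refl 3, fun i j h => hxx i j (le_of_eq h), fun i j h => hyy i j (le_of_eq h),
      fun i j h => hyx j i (le_of_eq h.symm), hxx, hyy, hyx, hxy⟩
  exact ⟨hcrown, not_dismantlable_of_crown hcrown⟩
end

section
/- Every finite p-group possessing a cyclic maximal subgroup has dismantlable subgroup lattice. -/
/-!
A maximal subgroup `M` of a finite `p`-group is normal, and the subgroups of a cyclic `p`-group
form a chain. If `H ⊓ K ⊄ M` then `(H ⊓ K) ⊔ M = G`, so by Dedekind's modular law
`H = (H ⊓ K) ⊔ (M ⊓ H)` and `K = (H ⊓ K) ⊔ (M ⊓ K)`; since `M ⊓ H` and `M ⊓ K` are comparable,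
so are `H` and `K`. Consequently, listing first the subgroups of `M` by increasing order and then
the remaining subgroups by decreasing order, every initial segment is closed under `⊔` and `⊓`,
and the initial segments form the required chain of sublattices.
-/

theorem Dismantlable.of_equiv_fin {L : Type*} [Lattice L] [Finite L] (e : L ≃ Fin (Nat.card L))
    (hsup : ∀ a b, e (a ⊔ b) ≤ max (e a) (e b)) (hinf : ∀ a b, e (a ⊓ b) ≤ max (e a) (e b)) :
    Dismantlable L := by
  refine ⟨fun i => {a | (e a : ℕ) < i}, fun i _ hi => ⟨⟨?_, ?_⟩, ?_⟩,
    fun i _ _ a ha => Nat.lt_succ_of_lt ha, Set.eq_univ_of_forall fun a => (e a).isLt⟩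
  · intro a ha b hb
    have := Fin.le_def.mp (hsup a b)
    simp only [Set.mem_ofPred_eq, Fin.coe_max] at ha hb this ⊢
    omega
  · intro a ha b hb
    have := Fin.le_def.mp (hinf a b)
    simp only [Set.mem_ofPred_eq, Fin.coe_max] at ha hb this ⊢
    omega
  · change Nat.card {a // (e a : ℕ) < i} = i
    rw [Nat.card_congr (e.subtypeEquiv (q := fun j : Fin _ => (j : ℕ) < i) fun a => Iff.rfl),
      Nat.card_eq_fintype_card, Fintype.card_subtype, Fin.card_filter_val_lt, min_eq_right hi]

theorem Dismantlable.of_injective {L α : Type*} [Lattice L] [Finite L] [LinearOrder α]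
    (κ : L → α) (hκ : Function.Injective κ)
    (hsup : ∀ a b, κ (a ⊔ b) ≤ max (κ a) (κ b)) (hinf : ∀ a b, κ (a ⊓ b) ≤ max (κ a) (κ b)) :
    Dismantlable L := by
  classical
  have := Fintype.ofFinite (Set.range κ)
  let sort := Fintype.orderIsoFinOfCardEq (Set.range κ)
    ((Fintype.card_eq_nat_card).trans (Nat.card_range_of_injective hκ))
  let e : L ≃ Fin (Nat.card L) := (Equiv.ofInjective κ hκ).trans sort.symm.toEquiv
  have he : ∀ a b, e a ≤ e b ↔ κ a ≤ κ b := fun a b => sort.symm.le_iff_le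
  have hmax : ∀ x a b, κ x ≤ max (κ a) (κ b) → e x ≤ max (e a) (e b) := fun x a b h => by
    rw [le_max_iff, he, he]
    exact le_max_iff.mp h
  exact .of_equiv_fin e (fun a b => hmax _ a b (hsup a b)) (fun a b => hmax _ a b (hinf a b))

theorem Dismantlable.of_rank {L α : Type*} [Lattice L] [Finite L] [LinearOrder α] (ρ : L → α)
    (hsup : ∀ a b, a ⊔ b = a ∨ a ⊔ b = b ∨ ρ (a ⊔ b) < max (ρ a) (ρ b))
    (hinf : ∀ a b, a ⊓ b = a ∨ a ⊓ b = b ∨ ρ (a ⊓ b) < max (ρ a) (ρ b)) :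
    Dismantlable L := by
  let κ : L → α ×ₗ Fin (Nat.card L) := fun a => toLex (ρ a, Finite.equivFin L a)
  have hκ : Function.Injective κ := fun a b h =>
    (Finite.equivFin L).injective (Prod.ext_iff.mp (toLex.injective h)).2
  have hle : ∀ c a b, c = a ∨ c = b ∨ ρ c < max (ρ a) (ρ b) → κ c ≤ max (κ a) (κ b) := by
    rintro c a b (rfl | rfl | h)
    · exact le_max_left _ _
    · exact le_max_right _ _
    · refine le_of_lt (lt_max_iff.mpr ?_)
      rcases lt_max_iff.mp h with h | h
      · exact .inl (Prod.Lex.lt_iff.mpr (.inl h))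
      · exact .inr (Prod.Lex.lt_iff.mpr (.inl h))
  exact .of_injective κ hκ (fun a b => hle _ a b (hsup a b)) (fun a b => hle _ a b (hinf a b))

theorem IsCyclic.subgroup_le_of_card_dvd {C : Type*} [Group C] [Finite C] [IsCyclic C]
    {X Y : Subgroup C} (h : Nat.card X ∣ Nat.card Y) : X ≤ Y := by
  classical
  cases nonempty_fintype C
  -- `Y` fills up the solution set of `y ^ |Y| = 1`, which has at most `|Y|` elements
  have hY : (Y : Set C).toFinset = Finset.univ.filter (· ^ Nat.card Y = 1) := by
    refine Finset.eq_of_subset_of_card_le (fun y hy => ?_) ?_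
    · rw [Set.mem_toFinset, SetLike.mem_coe] at hy
      have : (⟨y, hy⟩ : Y) ^ Nat.card Y = 1 := pow_card_eq_one'
      exact Finset.mem_filter.mpr ⟨Finset.mem_univ y, congrArg Subtype.val this⟩
    · rw [Set.toFinset_card, ← Nat.card_eq_fintype_card]
      exact IsCyclic.card_pow_eq_one_le Nat.card_pos
  intro x hx
  have hx' : x ^ Nat.card Y = 1 :=
    orderOf_dvd_iff_pow_eq_one.mp ((Subgroup.orderOf_dvd_natCard X hx).trans h)
  rw [← SetLike.mem_coe, ← Set.mem_toFinset, hY]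
  exact Finset.mem_filter.mpr ⟨Finset.mem_univ x, hx'⟩

theorem IsPGroup.subgroup_le_total_of_isCyclic {C : Type*} [Group C] [Finite C] [IsCyclic C]
    {p : ℕ} [Fact p.Prime] (hC : IsPGroup p C) (X Y : Subgroup C) : X ≤ Y ∨ Y ≤ X := by
  obtain ⟨m, hm⟩ := (hC.to_subgroup X).exists_card_eq
  obtain ⟨n, hn⟩ := (hC.to_subgroup Y).exists_card_eq
  rcases le_total m n with h | h
  · exact .inl (IsCyclic.subgroup_le_of_card_dvd (by rw [hm, hn]; exact pow_dvd_pow p h))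
  · exact .inr (IsCyclic.subgroup_le_of_card_dvd (by rw [hm, hn]; exact pow_dvd_pow p h))

theorem Subgroup.le_of_subgroupOf_le {G : Type*} [Group G] {A B M : Subgroup G} (hA : A ≤ M)
    (h : A.subgroupOf M ≤ B.subgroupOf M) : A ≤ B :=
  fun x hx => h (x := ⟨x, hA hx⟩) hx

theorem IsPGroup.le_total_of_le_of_isCyclic {G : Type*} [Group G] {p : ℕ} [Fact p.Prime]
    {M : Subgroup G} [Finite M] [IsCyclic M] (hM : IsPGroup p M) {A B : Subgroup G}
    (hA : A ≤ M) (hB : B ≤ M) : A ≤ B ∨ B ≤ A :=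
  (hM.subgroup_le_total_of_isCyclic _ _).imp (Subgroup.le_of_subgroupOf_le hA)
    (Subgroup.le_of_subgroupOf_le hB)

theorem Subgroup.sup_inf_assoc_of_le_of_normal {G : Type*} [Group G] {X N H : Subgroup G}
    [N.Normal] (h : X ≤ H) : (X ⊔ N) ⊓ H = X ⊔ N ⊓ H := by
  refine le_antisymm (fun x hx => ?_)
    (le_inf (sup_le_sup_left inf_le_left _) (sup_le h inf_le_right))
  obtain ⟨hxXN, hxH⟩ := mem_inf.mp hx
  rw [← SetLike.mem_coe, mul_normal] at hxXN
  obtain ⟨a, ha, n, hn, rfl⟩ := hxXN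
  have hnH : n ∈ H := by simpa using mul_mem (inv_mem (h ha)) hxH
  exact mul_mem (mem_sup_left ha) (mem_sup_right ⟨hn, hnH⟩)

theorem Subgroup.le_total_of_inf_not_le {G : Type*} [Group G] {M : Subgroup G} [M.Normal]
    (hM : IsCoatom M) (hchain : ∀ A B : Subgroup G, A ≤ M → B ≤ M → A ≤ B ∨ B ≤ A)
    {H K : Subgroup G} (hHK : ¬H ⊓ K ≤ M) : H ≤ K ∨ K ≤ H := by
  have htop : H ⊓ K ⊔ M = ⊤ := hM.2 _ (right_lt_sup.mpr hHK)
  have hH : H = H ⊓ K ⊔ M ⊓ H := by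
    rw [← sup_inf_assoc_of_le_of_normal inf_le_left, htop, top_inf_eq]
  have hK : K = H ⊓ K ⊔ M ⊓ K := by
    rw [← sup_inf_assoc_of_le_of_normal inf_le_right, htop, top_inf_eq]
  exact (hchain (M ⊓ H) (M ⊓ K) inf_le_left inf_le_left).imp
    (fun h => hH.trans_le ((sup_le_sup_left h _).trans_eq hK.symm))
    (fun h => hK.trans_le ((sup_le_sup_left h _).trans_eq hH.symm))

theorem dismantlable_subgroup_of_normal_coatom {G : Type*} [Group G] [Finite G]
    {M : Subgroup G} [M.Normal] (hM : IsCoatom M)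
    (hchain : ∀ A B : Subgroup G, A ≤ M → B ≤ M → A ≤ B ∨ B ≤ A) :
    Dismantlable (Subgroup G) := by
  classical
  let ρ : Subgroup G → ℕ := fun H => if H ≤ M then Nat.card H else 2 * Nat.card G - Nat.card H
  have hM_lt : Nat.card M < Nat.card G :=
    (Set.card_strictMono (SetLike.coe_strictMono hM.lt_top)).trans_eq Subgroup.card_top
  have hρ_anti : ∀ {H K : Subgroup G}, ¬H ≤ M → H < K → ρ K < ρ H := fun {H K} hH hHK => by
    have hK : ¬K ≤ M := fun hK => hH (hHK.le.trans hK)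
    have : Nat.card H < Nat.card K := Set.card_strictMono (SetLike.coe_strictMono hHK)
    have := K.card_le_card_group
    simp only [ρ, if_neg hH, if_neg hK]
    omega
  have hρ_lt : ∀ {H K : Subgroup G}, H ≤ M → ¬K ≤ M → ρ H < ρ K := fun {H K} hH hK => by
    have := Subgroup.card_le_of_le hH
    have := K.card_le_card_group
    simp only [ρ, if_pos hH, if_neg hK]
    omega
  refine Dismantlable.of_rank ρ (fun a b => ?_) (fun a b => ?_)
  · by_cases ha : a ≤ M
    · by_cases hb : b ≤ M
      · exact (hchain a b ha hb).elim (fun h => .inr (.inl (sup_eq_right.mpr h)))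
          (fun h => .inl (sup_eq_left.mpr h))
      · rcases (le_sup_right : b ≤ a ⊔ b).eq_or_lt with h | h
        · exact .inr (.inl h.symm)
        · exact .inr (.inr (lt_max_of_lt_right (hρ_anti hb h)))
    · rcases (le_sup_left : a ≤ a ⊔ b).eq_or_lt with h | h
      · exact .inl h.symm
      · exact .inr (.inr (lt_max_of_lt_left (hρ_anti ha h)))
  · by_cases hab : a ⊓ b ≤ M
    · by_cases ha : a ≤ M
      · by_cases hb : b ≤ M
        · exact (hchain a b ha hb).elim (fun h => .inl (inf_eq_left.mpr h))
            (fun h => .inr (.inl (inf_eq_right.mpr h)))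
        · exact .inr (.inr (lt_max_of_lt_right (hρ_lt hab hb)))
      · exact .inr (.inr (lt_max_of_lt_left (hρ_lt hab ha)))
    · exact (Subgroup.le_total_of_inf_not_le hM hchain hab).elim
        (fun h => .inl (inf_eq_left.mpr h)) (fun h => .inr (.inl (inf_eq_right.mpr h)))

/-- Every finite `p`-group possessing a cyclic maximal subgroup has dismantlable
subgroup lattice. -/
theorem stmt14 {G : Type*} [Group G] [Finite G] (p : ℕ) (hp : p.Prime)
    (hG : IsPGroup p G) (M : Subgroup G) (hM : IsCoatom M) (hMc : IsCyclic M) :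
    Dismantlable (Subgroup G) := by
  have : Fact p.Prime := ⟨hp⟩
  have : Group.IsNilpotent G := hG.isNilpotent
  have : M.Normal :=
    Subgroup.NormalizerCondition.normal_of_coatom M Group.normalizerCondition_of_isNilpotent hM
  exact dismantlable_subgroup_of_normal_coatom hM fun A B =>
    (hG.to_subgroup M).le_total_of_le_of_isCyclic
end

section
/- For every integer n ≥ 3, the generalized quaternion group Q_{2ⁿ} of order 2ⁿ (presented as ⟨x, y ∣ x^{2^{n−1}} = y⁴ = 1, yxy⁻¹ = x^{2^{n−1}−1}⟩) has dismantlable subgroup lattice. -/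
/-! Let `A = ⟨a⟩` be the cyclic subgroup of index two in `Q_{2ⁿ}`. The subgroups of `A` form a
chain, and two subgroups `H, K` whose intersection contains some `x ∉ A` are comparable, since
`H = (H ∩ A) ∪ x (H ∩ A)`. In any sublattice `S` of the subgroup lattice a minimal member not
contained in `A` (or any member, if there is none) is then neither the join nor the meet of two
incomparable members of `S`, so it can be removed; removing elements one by one dismantles the
lattice. -/

section Lattice

variable {L : Type*} [Lattice L]

theorem IsSublattice.diff_singleton {S : Set L} {a : L} (hS : IsSublattice S)
    (hsup : ∀ b ∈ S, ∀ c ∈ S, b ⊔ c = a → b ≤ c ∨ c ≤ b)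
    (hinf : ∀ b ∈ S, ∀ c ∈ S, b ⊓ c = a → b ≤ c ∨ c ≤ b) :
    IsSublattice (S \ {a}) := by
  constructor
  · rintro b ⟨hb, hba⟩ c ⟨hc, hca⟩
    refine ⟨hS.supClosed hb hc, fun hbc => ?_⟩
    rcases hsup b hb c hc hbc with h | h
    · exact hca (by rwa [sup_eq_right.mpr h] at hbc)
    · exact hba (by rwa [sup_eq_left.mpr h] at hbc)
  · rintro b ⟨hb, hba⟩ c ⟨hc, hca⟩
    refine ⟨hS.infClosed hb hc, fun hbc => ?_⟩
    rcases hinf b hb c hc hbc with h | h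
    · exact hba (by rwa [inf_eq_left.mpr h] at hbc)
    · exact hca (by rwa [inf_eq_right.mpr h] at hbc)

theorem exists_dismantling_chain_of_isSublattice
    (hrem : ∀ S : Set L, IsSublattice S → S.Nonempty → ∃ a ∈ S, IsSublattice (S \ {a}))
    (k : ℕ) (S : Set L) (hS : IsSublattice S) (hcard : S.ncard = k + 1) :
    ∃ c : ℕ → Set L,
      (∀ i, 1 ≤ i → i ≤ k + 1 → IsSublattice (c i) ∧ Nat.card (c i) = i) ∧
      (∀ i, 1 ≤ i → i < k + 1 → c i ⊆ c (i + 1)) ∧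
      c (k + 1) = S := by
  induction k generalizing S with
  | zero =>
    refine ⟨fun _ => S, fun i h1 h2 => ?_, fun i h1 h2 => by omega, rfl⟩
    obtain rfl : i = 1 := by omega
    exact ⟨hS, by rw [Nat.card_coe_set_eq, hcard]⟩
  | succ k ih =>
    obtain ⟨a, haS, hS'⟩ := hrem S hS (Set.nonempty_of_ncard_ne_zero (by omega))
    obtain ⟨c, hc, hmono, htop⟩ := ih (S \ {a}) hS'
      (by rw [Set.ncard_sdiff_singleton_of_mem haS, hcard]; omega)
    refine ⟨Function.update c (k + 2) S, fun i h1 h2 => ?_, fun i h1 h2 => ?_,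
      Function.update_self ..⟩
    · rcases eq_or_ne i (k + 2) with rfl | hi
      · rw [Function.update_self]
        exact ⟨hS, by rw [Nat.card_coe_set_eq, hcard]⟩
      · rw [Function.update_of_ne hi]
        exact hc i h1 (by omega)
    · rw [Function.update_of_ne (by omega : i ≠ k + 2)]
      rcases eq_or_ne i (k + 1) with rfl | hi
      · rw [Function.update_self, htop]
        exact Set.sdiff_subset
      · rw [Function.update_of_ne (by omega : i + 1 ≠ k + 2)]
        exact hmono i h1 (by omega)

theorem dismantlable_of_exists_isSublattice_diff_singleton [Finite L] [Nonempty L]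
    (hrem : ∀ S : Set L, IsSublattice S → S.Nonempty → ∃ a ∈ S, IsSublattice (S \ {a})) :
    Dismantlable L := by
  have hpos : 0 < Nat.card L := Nat.card_pos
  obtain ⟨c, hc, hmono, htop⟩ := exists_dismantling_chain_of_isSublattice hrem (Nat.card L - 1)
    Set.univ isSublattice_univ (by rw [Set.ncard_univ]; omega)
  rw [Nat.sub_add_cancel hpos] at hc hmono htop
  exact ⟨c, hc, hmono, htop⟩

theorem dismantlable_of_chain_below [Finite L] [Nonempty L] (A : L)
    (hbelow : ∀ b c, b ≤ A → c ≤ A → b ≤ c ∨ c ≤ b)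
    (hinf : ∀ b c, ¬ b ⊓ c ≤ A → b ≤ c ∨ c ≤ b) :
    Dismantlable L := by
  refine dismantlable_of_exists_isSublattice_diff_singleton fun S hS hne => ?_
  by_cases hT : ∃ b ∈ S, ¬ b ≤ A
  · obtain ⟨a, ⟨haS, haA⟩, hmin⟩ :=
      exists_minimal_of_wellFoundedLT (fun b => b ∈ S ∧ ¬ b ≤ A) hT
    refine ⟨a, haS, hS.diff_singleton (fun b hb c hc hbc => ?_)
      (fun b _ c _ hbc => hinf b c (hbc ▸ haA))⟩
    by_cases hbA : b ≤ A
    · by_cases hcA : c ≤ A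
      · exact hbelow b c hbA hcA
      · exact Or.inl ((hbc ▸ le_sup_left).trans (hmin ⟨hc, hcA⟩ (hbc ▸ le_sup_right)))
    · exact Or.inr ((hbc ▸ le_sup_right).trans (hmin ⟨hb, hbA⟩ (hbc ▸ le_sup_left)))
  · push Not at hT
    obtain ⟨a, haS⟩ := hne
    exact ⟨a, haS, hS.diff_singleton (fun b hb c hc _ => hbelow b c (hT b hb) (hT c hc))
      (fun b hb c hc _ => hbelow b c (hT b hb) (hT c hc))⟩

end Lattice

namespace Subgroup

variable {G : Type*} [Group G]

theorem exists_zpowers_pow_prime_pow_eq {p k : ℕ} (hp : p.Prime) {g : G} (hg : g ^ p ^ k = 1)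
    {H : Subgroup G} (hH : H ≤ zpowers g) : ∃ s, H = zpowers (g ^ p ^ s) := by
  obtain ⟨i, rfl⟩ := (le_zpowers_iff g H).mp hH
  rcases eq_or_ne i 0 with rfl | hi
  · exact ⟨k, by rw [pow_zero, hg]⟩
  obtain ⟨s, u, hpu, rfl⟩ := Nat.exists_eq_pow_mul_and_not_dvd hi p hp.ne_one
  refine ⟨s, le_antisymm (zpowers_le_of_mem ?_) (zpowers_le_of_mem ?_)⟩
  · rw [pow_mul]
    exact npow_mem_zpowers _ u
  · -- `u` is prime to `p`, hence invertible modulo the `p`-power order of `g ^ p ^ s`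
    have hord : orderOf (g ^ p ^ s) ∣ p ^ k :=
      orderOf_dvd_of_pow_eq_one (by rw [← pow_mul, mul_comm, pow_mul, hg, one_pow])
    rw [pow_mul, mem_zpowers_pow_iff]
    exact (((hp.coprime_iff_not_dvd.mpr hpu).pow_left k).symm.coprime_dvd_right hord)

theorem le_total_of_le_zpowers {p k : ℕ} (hp : p.Prime) {g : G} (hg : g ^ p ^ k = 1)
    {H K : Subgroup G} (hH : H ≤ zpowers g) (hK : K ≤ zpowers g) : H ≤ K ∨ K ≤ H := by
  obtain ⟨s, rfl⟩ := exists_zpowers_pow_prime_pow_eq hp hg hH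
  obtain ⟨t, rfl⟩ := exists_zpowers_pow_prime_pow_eq hp hg hK
  have zpowers_antitone : ∀ {s t}, s ≤ t → zpowers (g ^ p ^ t) ≤ zpowers (g ^ p ^ s) :=
    fun {s t} hst => by
      obtain ⟨c, hc⟩ := pow_dvd_pow p hst
      exact zpowers_le_of_mem (by rw [hc, pow_mul]; exact npow_mem_zpowers _ c)
  rcases le_total s t with hst | hts
  · exact Or.inr (zpowers_antitone hst)
  · exact Or.inl (zpowers_antitone hts)

theorem le_of_inf_le_of_index_eq_two {A H K : Subgroup G} (hA : A.index = 2) {x : G}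
    (hxA : x ∉ A) (hxH : x ∈ H) (hxK : x ∈ K) (hHK : H ⊓ A ≤ K) : H ≤ K := by
  intro h hh
  by_cases hhA : h ∈ A
  · exact hHK ⟨hh, hhA⟩
  · have hxh : x⁻¹ * h ∈ A := by
      rw [mul_mem_iff_of_index_two hA, inv_mem_iff]
      exact iff_of_false hxA hhA
    simpa using K.mul_mem hxK (hHK ⟨H.mul_mem (H.inv_mem hxH) hh, hxh⟩)

theorem le_total_of_not_inf_le_of_index_eq_two {A H K : Subgroup G} (hA : A.index = 2)
    (hchain : ∀ H' K' : Subgroup G, H' ≤ A → K' ≤ A → H' ≤ K' ∨ K' ≤ H')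
    (hHK : ¬ H ⊓ K ≤ A) : H ≤ K ∨ K ≤ H := by
  obtain ⟨x, ⟨hxH, hxK⟩, hxA⟩ := SetLike.not_le_iff_exists.mp hHK
  rcases hchain (H ⊓ A) (K ⊓ A) inf_le_right inf_le_right with h | h
  · exact Or.inl (le_of_inf_le_of_index_eq_two hA hxA hxH hxK (h.trans inf_le_left))
  · exact Or.inr (le_of_inf_le_of_index_eq_two hA hxA hxK hxH (h.trans inf_le_left))

end Subgroup

open Subgroup in
theorem dismantlable_subgroup_of_index_zpowers_eq_two {G : Type*} [Group G] [Finite G]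
    {p k : ℕ} (hp : p.Prime) {g : G} (hg : g ^ p ^ k = 1) (hindex : (zpowers g).index = 2) :
    Dismantlable (Subgroup G) :=
  have hchain : ∀ H K : Subgroup G, H ≤ zpowers g → K ≤ zpowers g → H ≤ K ∨ K ≤ H :=
    fun _ _ => le_total_of_le_zpowers hp hg
  dismantlable_of_chain_below (zpowers g) hchain
    fun _ _ => le_total_of_not_inf_le_of_index_eq_two hindex hchain

namespace QuaternionGroup

theorem index_zpowers_a_one (m : ℕ) [NeZero m] :
    (Subgroup.zpowers (a 1 : QuaternionGroup m)).index = 2 := by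
  have h := (Subgroup.zpowers (a 1 : QuaternionGroup m)).index_mul_card
  rw [Nat.card_zpowers, orderOf_a_one, Nat.card_eq_fintype_card, card] at h
  exact Nat.eq_of_mul_eq_mul_right (Nat.pos_of_neZero (2 * m)) (by rw [h]; ring)

theorem dismantlable_subgroup_two_pow (k : ℕ) :
    Dismantlable (Subgroup (QuaternionGroup (2 ^ k))) :=
  dismantlable_subgroup_of_index_zpowers_eq_two Nat.prime_two
    (by rw [pow_succ', a_one_pow_n]) (index_zpowers_a_one (2 ^ k))

end QuaternionGroup

theorem stmt15_general (n : ℕ) :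
    Dismantlable (Subgroup (QuaternionGroup (2 ^ (n - 2)))) :=
  QuaternionGroup.dismantlable_subgroup_two_pow (n - 2)

/-- For every `n ≥ 3`, the generalized quaternion group `Q_{2ⁿ}` of order `2 ^ n`
(realized as the dicyclic group `QuaternionGroup (2 ^ (n - 2))`) has dismantlable
subgroup lattice. -/
theorem stmt15 (n : ℕ) (hn : 3 ≤ n) :
    Dismantlable (Subgroup (QuaternionGroup (2 ^ (n - 2)))) :=
  stmt15_general n
end
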